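/- arXiv:2403.16065 — 2 statements merged into one kernel-verified Lean document; each statement's English description precedes it below -/
import Mathlib

section
/- Let A and B be 2×2 complex matrices and φ ∈ ℂ² ⊗ ℂ². Then χ((A ⊗ B)φ) = (det A)(det B) χ(φ). -/
open Matrix Kronecker Complex

noncomputable section

/-- The Pauli matrix `σ_y`. -/
def sigmaY : Matrix (Fin 2) (Fin 2) ℂ := !![0, -I; I, 0]

/-- The inner product on `ℂ² ⊗ ℂ² ≃ ℂ^{2×2}`, antilinear in the first argument
(physicists' convention). -/
def inn (ψ φ : Fin 2 × Fin 2 → ℂ) : ℂ := ∑ k, (starRingEnd ℂ) (ψ k) * φ k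

/-- The antilinear conjugation `T̄`, complex-conjugating the coefficients in the
computational basis. -/
def conjT (φ : Fin 2 × Fin 2 → ℂ) : Fin 2 × Fin 2 → ℂ := fun k => (starRingEnd ℂ) (φ k)

/-- `χ(φ) = ⟨T̄φ | (σ_y ⊗ σ_y) φ⟩`. -/
def chi (φ : Fin 2 × Fin 2 → ℂ) : ℂ := inn (conjT φ) ((sigmaY ⊗ₖ sigmaY).mulVec φ)

/-- The computational basis vector `|ij⟩`. -/
def ket (i j : Fin 2) : Fin 2 × Fin 2 → ℂ := fun k => if k = (i, j) then 1 else 0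

end

/-- `χ((A ⊗ B)φ) = (det A)(det B) χ(φ)`. -/
theorem chi_kronecker_mulVec (A B : Matrix (Fin 2) (Fin 2) ℂ) (φ : Fin 2 × Fin 2 → ℂ) :
    chi ((A ⊗ₖ B).mulVec φ) = A.det * B.det * chi φ := by
  simp only [chi, inn, conjT, sigmaY, Matrix.mulVec, dotProduct, kroneckerMap_apply,
    Fintype.sum_prod_type, Fin.sum_univ_two, Matrix.det_fin_two, Matrix.of_apply,
    Matrix.cons_val', Matrix.cons_val_zero, Matrix.cons_val_one, Matrix.head_cons,
    Matrix.empty_val', Matrix.cons_val_fin_one, Matrix.head_fin_const, _root_.map_mul, map_add, Complex.conj_conj]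
  ring
end

section
/- Define U± = (σ_x ⊗ I ± i · I ⊗ σ_x)/√2 on ℂ² ⊗ ℂ². Then U± are unitary, U± |11⟩ = (|01⟩ ± i|10⟩)/√2, and while the initial state satisfies C(|11⟩) = 0, the state after the jump is maximally entangled: C(U± |11⟩) = 1. -/
open Matrix Kronecker Complex

noncomputable section

/-- The Pauli matrix `σ_x`. -/
def sigmaX : Matrix (Fin 2) (Fin 2) ℂ := !![0, 1; 1, 0]

/-- The Pauli matrix `σ_z`. -/
def sigmaZ : Matrix (Fin 2) (Fin 2) ℂ := !![1, 0; 0, -1]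

end

/-! With `A = σ_x ⊗ I` and `B = I ⊗ σ_x`, commuting Hermitian involutions, the cross terms of
`(A ∓ iB)(A ± iB)` cancel and it equals `A² + B² = 2`, so `U±` is unitary. Since `T̄` undoes the
antilinearity of the inner product, `χ` is the quadratic form `2(φ₀₁φ₁₀ - φ₀₀φ₁₁)`: it vanishes on
`|11⟩` and takes the values `±i` on `U±|11⟩ = (|01⟩ ± i|10⟩)/√2`. -/

lemma inv_sqrt_two_sq : (Real.sqrt 2 : ℂ)⁻¹ ^ 2 = 2⁻¹ := by
  rw [inv_pow, ← ofReal_pow, Real.sq_sqrt zero_le_two]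
  norm_num

lemma smul_add_I_smul_mem_unitary {R : Type*} [Ring R] [StarRing R] [Algebra ℂ R]
    [StarModule ℂ R] {a b : R} (ha : IsSelfAdjoint a) (hb : IsSelfAdjoint b)
    (haa : a * a = 1) (hbb : b * b = 1) (hab : Commute a b) :
    (Real.sqrt 2 : ℂ)⁻¹ • (a + I • b) ∈ unitary R := by
  have hstar : star ((Real.sqrt 2 : ℂ)⁻¹ • (a + I • b))
      = (Real.sqrt 2 : ℂ)⁻¹ • (a - I • b) := by
    simp [star_smul, ha.star_eq, hb.star_eq, sub_eq_add_neg]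
  have hprod : (a - I • b) * (a + I • b) = (2 : ℂ) • 1 := by
    simp only [sub_mul, mul_add, mul_smul_comm, smul_mul_assoc, haa, hbb, hab.eq]
    match_scalars <;> norm_num
  have hprod' : (a + I • b) * (a - I • b) = (2 : ℂ) • 1 := by
    simp only [add_mul, mul_sub, mul_smul_comm, smul_mul_assoc, haa, hbb, hab.eq]
    match_scalars <;> norm_num
  rw [Unitary.mem_iff, hstar, smul_mul_smul_comm, smul_mul_smul_comm, hprod, hprod', smul_smul,
    ← sq, inv_sqrt_two_sq]
  norm_num

lemma isSelfAdjoint_sigmaX : IsSelfAdjoint sigmaX := by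
  ext i j; fin_cases i <;> fin_cases j <;> simp [sigmaX]

lemma sigmaX_mul_self : sigmaX * sigmaX = 1 := by
  ext i j; fin_cases i <;> fin_cases j <;> simp [sigmaX]

lemma IsSelfAdjoint.kronecker {R m n : Type*} [CommSemiring R] [StarRing R] {A : Matrix m m R}
    {B : Matrix n n R} (hA : IsSelfAdjoint A) (hB : IsSelfAdjoint B) : IsSelfAdjoint (A ⊗ₖ B) := by
  rw [IsSelfAdjoint, star_eq_conjTranspose, conjTranspose_kronecker, ← star_eq_conjTranspose,
    ← star_eq_conjTranspose, hA.star_eq, hB.star_eq]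

lemma kronecker_mul_self_eq_one {R m n : Type*} [CommSemiring R] [Fintype m] [Fintype n]
    [DecidableEq m] [DecidableEq n] {A : Matrix m m R} {B : Matrix n n R} (hA : A * A = 1)
    (hB : B * B = 1) : (A ⊗ₖ B) * (A ⊗ₖ B) = 1 := by
  rw [← mul_kronecker_mul, hA, hB, one_kronecker_one]

lemma commute_kronecker_one_one_kronecker {R m n : Type*} [CommSemiring R] [Fintype m]
    [Fintype n] [DecidableEq m] [DecidableEq n] (A : Matrix m m R) (B : Matrix n n R) :
    Commute (A ⊗ₖ (1 : Matrix n n R)) ((1 : Matrix m m R) ⊗ₖ B) := by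
  simp only [Commute, SemiconjBy, ← mul_kronecker_mul, Matrix.mul_one, Matrix.one_mul]

lemma sigmaX_apply (k i : Fin 2) : sigmaX k i = if k = i.rev then 1 else 0 := by
  fin_cases k <;> fin_cases i <;> rfl

lemma ket_eq_single (i j : Fin 2) : ket i j = Pi.single (i, j) 1 := by
  ext k; simp [ket, Pi.single_apply]

lemma kronecker_mulVec_ket (A B : Matrix (Fin 2) (Fin 2) ℂ) (i j : Fin 2) :
    (A ⊗ₖ B) *ᵥ ket i j = fun k => A k.1 i * B k.2 j := by
  rw [ket_eq_single, mulVec_single_one]; rfl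

lemma sigmaX_kronecker_one_mulVec_ket (i j : Fin 2) :
    (sigmaX ⊗ₖ (1 : Matrix (Fin 2) (Fin 2) ℂ)) *ᵥ ket i j = ket i.rev j := by
  ext ⟨k, l⟩
  simp [kronecker_mulVec_ket, sigmaX_apply, ket, one_apply, ← ite_and, and_comm]

lemma one_kronecker_sigmaX_mulVec_ket (i j : Fin 2) :
    ((1 : Matrix (Fin 2) (Fin 2) ℂ) ⊗ₖ sigmaX) *ᵥ ket i j = ket i j.rev := by
  ext ⟨k, l⟩
  simp [kronecker_mulVec_ket, sigmaX_apply, ket, one_apply, ← ite_and, and_comm]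

lemma chi_eq (φ : Fin 2 × Fin 2 → ℂ) :
    chi φ = 2 * (φ (0, 1) * φ (1, 0) - φ (0, 0) * φ (1, 1)) := by
  simp [chi, inn, conjT, mulVec, dotProduct, Fintype.sum_prod_type, sigmaY]
  ring

lemma chi_smul (c : ℂ) (φ : Fin 2 × Fin 2 → ℂ) : chi (c • φ) = c ^ 2 * chi φ := by
  simp only [chi_eq, Pi.smul_apply, smul_eq_mul]
  ring

lemma chi_ket_one_one : chi (ket 1 1) = 0 := by
  simp [chi_eq, ket]

lemma chi_ket_zero_one_add_smul_ket_one_zero (c : ℂ) : chi (ket 0 1 + c • ket 1 0) = 2 * c := by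
  simp [chi_eq, ket]

lemma norm_chi_inv_sqrt_two_smul (c : ℂ) (hc : ‖c‖ = 1) :
    ‖chi ((Real.sqrt 2 : ℂ)⁻¹ • (ket 0 1 + c • ket 1 0))‖ = 1 := by
  rw [chi_smul, chi_ket_zero_one_add_smul_ket_one_zero, inv_sqrt_two_sq, ← mul_assoc,
    inv_mul_cancel₀ two_ne_zero, one_mul, hc]

/-- The non-local jump operators `U± = (σ_x ⊗ I ± i I ⊗ σ_x)/√2` are
unitary, map `|11⟩` to `(|01⟩ ± i|10⟩)/√2`, and turn the separable state `|11⟩`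
(concurrence `0`) into a maximally entangled state (concurrence `1`). -/
theorem nonlocal_jump_creates_entanglement
    (Uplus Uminus : Matrix (Fin 2 × Fin 2) (Fin 2 × Fin 2) ℂ)
    (hplus : Uplus = ((Real.sqrt 2 : ℂ))⁻¹ •
      (sigmaX ⊗ₖ (1 : Matrix (Fin 2) (Fin 2) ℂ)
        + Complex.I • ((1 : Matrix (Fin 2) (Fin 2) ℂ) ⊗ₖ sigmaX)))
    (hminus : Uminus = ((Real.sqrt 2 : ℂ))⁻¹ •
      (sigmaX ⊗ₖ (1 : Matrix (Fin 2) (Fin 2) ℂ)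
        - Complex.I • ((1 : Matrix (Fin 2) (Fin 2) ℂ) ⊗ₖ sigmaX))) :
    Uplus ∈ Matrix.unitaryGroup (Fin 2 × Fin 2) ℂ ∧
    Uminus ∈ Matrix.unitaryGroup (Fin 2 × Fin 2) ℂ ∧
    Uplus.mulVec (ket 1 1) = ((Real.sqrt 2 : ℂ))⁻¹ • (ket 0 1 + Complex.I • ket 1 0) ∧
    Uminus.mulVec (ket 1 1) = ((Real.sqrt 2 : ℂ))⁻¹ • (ket 0 1 - Complex.I • ket 1 0) ∧
    ‖chi (ket 1 1)‖ = 0 ∧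
    ‖chi (Uplus.mulVec (ket 1 1))‖ = 1 ∧
    ‖chi (Uminus.mulVec (ket 1 1))‖ = 1 := by
  set A := sigmaX ⊗ₖ (1 : Matrix (Fin 2) (Fin 2) ℂ)
  set B := (1 : Matrix (Fin 2) (Fin 2) ℂ) ⊗ₖ sigmaX
  have hA : IsSelfAdjoint A := isSelfAdjoint_sigmaX.kronecker (.one _)
  have hB : IsSelfAdjoint B := (IsSelfAdjoint.one _).kronecker isSelfAdjoint_sigmaX
  have hAA : A * A = 1 := kronecker_mul_self_eq_one sigmaX_mul_self (mul_one 1)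
  have hBB : B * B = 1 := kronecker_mul_self_eq_one (mul_one 1) sigmaX_mul_self
  have hAB : Commute A B := commute_kronecker_one_one_kronecker sigmaX sigmaX
  have hAket : A *ᵥ ket 1 1 = ket 0 1 := sigmaX_kronecker_one_mulVec_ket 1 1
  have hBket : B *ᵥ ket 1 1 = ket 1 0 := one_kronecker_sigmaX_mulVec_ket 1 1
  have hplus_ket : Uplus *ᵥ ket 1 1 = ((Real.sqrt 2 : ℂ))⁻¹ • (ket 0 1 + I • ket 1 0) := by
    rw [hplus, smul_mulVec, add_mulVec, smul_mulVec, hAket, hBket]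
  have hminus_ket : Uminus *ᵥ ket 1 1 = ((Real.sqrt 2 : ℂ))⁻¹ • (ket 0 1 - I • ket 1 0) := by
    rw [hminus, smul_mulVec, sub_mulVec, smul_mulVec, hAket, hBket]
  refine ⟨hplus ▸ smul_add_I_smul_mem_unitary hA hB hAA hBB hAB, ?_, hplus_ket, hminus_ket,
    by rw [chi_ket_one_one, norm_zero], by rw [hplus_ket, norm_chi_inv_sqrt_two_smul I norm_I], ?_⟩
  · rw [hminus, sub_eq_add_neg, ← smul_neg]
    exact smul_add_I_smul_mem_unitary hA hB.neg hAA (by rw [neg_mul_neg, hBB]) hAB.neg_right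
  · rw [hminus_ket, sub_eq_add_neg, ← neg_smul, norm_chi_inv_sqrt_two_smul (-I) (by simp)]
end
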